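/- arXiv:0903.0369 — 2 statements merged into one kernel-verified Lean document; each statement's English description precedes it below -/
import Mathlib

section
/- Let f be a homeomorphism of the open unit disk 𝔻. If there exist a point z ∈ 𝔻 and an integer q ≥ 2 such that f^q(z) = z and f(z) ≠ z (i.e. z is a periodic point of f which is not a fixed point), then f is recurrent. (Claim established in the proof of Proposition 1.4.) -/
open Set Filter Metric Topology

noncomputable section

/-- The open unit disk in the complex plane. -/
abbrev Disk : Set ℂ := Metric.ball 0 1

/-- The `k`-th iterate (`k ∈ ℤ`) of a homeomorphism of the open unit disk. -/
def fiter (f : ↥Disk ≃ₜ ↥Disk) (k : ℤ) : ↥Disk → ↥Disk := fun z => (f.toEquiv ^ k) z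

/-- A subset `X` of the disk is free for `f` if `f(X) ∩ X = ∅`. -/
def IsFreeSet (f : ↥Disk ≃ₜ ↥Disk) (X : Set ↥Disk) : Prop := (⇑f '' X) ∩ X = ∅

/-- An open disk: an open subset of `Disk` homeomorphic to `Disk`. -/
def IsOpenDisk (U : Set ↥Disk) : Prop := IsOpen U ∧ Nonempty (↥U ≃ₜ ↥Disk)

/-- `f` is recurrent: there is a closed chain of pairwise disjoint free open disks. -/
def RecurrentHomeo (f : ↥Disk ≃ₜ ↥Disk) : Prop :=
  ∃ r : ℕ, 1 ≤ r ∧ ∃ X : ZMod r → Set ↥Disk,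
    (∀ i, IsOpenDisk (X i)) ∧ (∀ i, IsFreeSet f (X i)) ∧
    (Pairwise fun i j => Disjoint (X i) (X j)) ∧
    (∀ i, ∃ k : ℤ, 1 ≤ k ∧ ((fiter f k '' X i) ∩ X (i + 1)).Nonempty)

/-!
A non-fixed point `z` can be separated from its image, so a small round disk around `z` is free.
Since `f^q` brings `z` back to itself, this single disk is a closed chain of length one.
-/

theorem exists_mem_nhds_disjoint_image_self {X : Type*} [TopologicalSpace X] [T2Space X]
    {g : X → X} {x : X} (hg : ContinuousAt g x) (hx : g x ≠ x) :
    ∃ V ∈ 𝓝 x, Disjoint (g '' V) V := by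
  obtain ⟨A, B, hA, hB, hAB⟩ := t2_separation_nhds hx
  refine ⟨B ∩ g ⁻¹' A, inter_mem hB (hg hA), ?_⟩
  exact hAB.mono (image_subset_iff.2 inter_subset_right) inter_subset_left

lemma isFreeSet_iff_disjoint {f : ↥Disk ≃ₜ ↥Disk} {X : Set ↥Disk} :
    IsFreeSet f X ↔ Disjoint (f '' X) X :=
  disjoint_iff_inter_eq_empty.symm

lemma image_val_ball_disk {z : ↥Disk} {ε : ℝ} (hε : ε ≤ 1 - ‖(z : ℂ)‖) :
    ((↑) : ↥Disk → ℂ) '' ball z ε = ball (z : ℂ) ε := by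
  have hsub : ball (z : ℂ) ε ⊆ Disk := ball_subset_ball' (by rw [dist_zero_right]; linarith)
  exact (Subtype.image_preimage_coe Disk (ball (z : ℂ) ε)).trans (inter_eq_right.2 hsub)

lemma isOpenDisk_ball {z : ↥Disk} {ε : ℝ} (hε : 0 < ε) (hεz : ε ≤ 1 - ‖(z : ℂ)‖) :
    IsOpenDisk (ball z ε) :=
  ⟨isOpen_ball, ⟨(Topology.IsEmbedding.subtypeVal.homeomorphImage _).trans <|
    (Homeomorph.setCongr (image_val_ball_disk hεz)).trans
      (OpenPartialHomeomorph.unitBallBall (z : ℂ) ε hε).toHomeomorphSourceTarget.symm⟩⟩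

lemma exists_isOpenDisk_mem_subset {z : ↥Disk} {V : Set ↥Disk} (hV : V ∈ 𝓝 z) :
    ∃ U, IsOpenDisk U ∧ z ∈ U ∧ U ⊆ V := by
  obtain ⟨ε, hε, hεV⟩ := Metric.mem_nhds_iff.1 hV
  have hz : 0 < 1 - ‖(z : ℂ)‖ := sub_pos.2 (mem_ball_zero_iff.1 z.2)
  refine ⟨ball z (min ε (1 - ‖(z : ℂ)‖)), isOpenDisk_ball (lt_min hε hz) (min_le_right _ _),
    mem_ball_self (lt_min hε hz), (ball_subset_ball (min_le_left _ _)).trans hεV⟩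

lemma recurrentHomeo_of_isOpenDisk_isFreeSet {f : ↥Disk ≃ₜ ↥Disk} {U : Set ↥Disk}
    (hU : IsOpenDisk U) (hfree : IsFreeSet f U) {k : ℤ} (hk : 1 ≤ k)
    (hret : (fiter f k '' U ∩ U).Nonempty) : RecurrentHomeo f :=
  ⟨1, le_rfl, fun _ => U, fun _ => hU, fun _ => hfree,
    fun i j hij => (hij (Subsingleton.elim i j)).elim, fun _ => ⟨k, hk, hret⟩⟩

/-- A periodic point which is not fixed forces recurrence
(claim established in the proof of Proposition 1.4). -/
theorem handel_periodic_recurrent (f : ↥Disk ≃ₜ ↥Disk) (z : ↥Disk)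
    (q : ℤ) (hq : 2 ≤ q) (hper : fiter f q z = z) (hfix : f z ≠ z) :
    RecurrentHomeo f := by
  obtain ⟨V, hV, hVfree⟩ := exists_mem_nhds_disjoint_image_self f.continuous.continuousAt hfix
  obtain ⟨U, hU, hzU, hUV⟩ := exists_isOpenDisk_mem_subset hV
  exact recurrentHomeo_of_isOpenDisk_isFreeSet hU
    (isFreeSet_iff_disjoint.2 (hVfree.mono (image_mono hUV) hUV)) (by omega) ⟨z, ⟨z, hzU, hper⟩, hzU⟩
end
end

section
/- Let f be a homeomorphism of the open unit disk 𝔻 and let z ∈ 𝔻 satisfy f(z) ≠ z and f²(z) ≠ z. Let γ be a translation arc for f joining z to f(z), and let γ' be a segment contained in int(γ). Then there exists an open set U ⊆ 𝔻 containing γ' such that every segment joining z to f(z) and contained in γ ∪ U is a translation arc for f. (Lemma 4.2.) -/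
/-!
Since `f(γ) ∩ γ = {f z}`, the compact segment `γ'`, which avoids the endpoints of `γ`, is free
and disjoint from the closed sets `f(γ)` and `f⁻¹(γ)`. So it has an open free neighbourhood `U`
avoiding both, and then enlarging `γ` by `U` creates no new intersections with its image:
`f(γ ∪ U) ∩ (γ ∪ U) = f(γ) ∩ γ`.
-/

open Set Filter Metric Topology

noncomputable section

/-- `γ` is a segment of the disk joining `a` to `b`: the image of an injective
continuous map defined on `[0,1]` sending `0` to `a` and `1` to `b`. -/
def IsSegment (γ : Set ↥Disk) (a b : ↥Disk) : Prop :=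
  ∃ g : ℝ → ↥Disk, ContinuousOn g (Set.Icc 0 1) ∧ Set.InjOn g (Set.Icc 0 1) ∧
    g 0 = a ∧ g 1 = b ∧ γ = g '' Set.Icc 0 1

/-- `γ` is a segment (with some endpoints). -/
def IsSegmentSet (γ : Set ↥Disk) : Prop := ∃ a b, IsSegment γ a b

/-- A translation arc for `f` at `z`. -/
def IsTranslationArc (f : ↥Disk ≃ₜ ↥Disk) (z : ↥Disk) (γ : Set ↥Disk) : Prop :=
  f z ≠ z ∧ IsSegment γ z (f z) ∧
  (f (f z) = z → (⇑f '' γ) ∩ γ = {z, f z}) ∧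
  (f (f z) ≠ z → (⇑f '' γ) ∩ γ = {f z})

open Function

theorem IsSegment.isCompact {γ : Set ↥Disk} {a b : ↥Disk} (h : IsSegment γ a b) :
    IsCompact γ := by
  obtain ⟨g, hg, -, -, -, rfl⟩ := h
  exact isCompact_Icc.image_of_continuousOn hg

theorem IsSegment.left_mem {γ : Set ↥Disk} {a b : ↥Disk} (h : IsSegment γ a b) : a ∈ γ := by
  obtain ⟨g, -, -, rfl, -, rfl⟩ := h
  exact mem_image_of_mem g (left_mem_Icc.2 zero_le_one)

theorem IsSegment.right_mem {γ : Set ↥Disk} {a b : ↥Disk} (h : IsSegment γ a b) : b ∈ γ := by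
  obtain ⟨g, -, -, -, rfl, rfl⟩ := h
  exact mem_image_of_mem g (right_mem_Icc.2 zero_le_one)

theorem IsCompact.exists_isOpen_superset_disjoint_image {X : Type*} [TopologicalSpace X]
    [T2Space X] {f : X → X} (hf : Continuous f) {K : Set X} (hK : IsCompact K)
    (hfree : Disjoint (f '' K) K) :
    ∃ U, IsOpen U ∧ K ⊆ U ∧ Disjoint (f '' U) U := by
  obtain ⟨V, W, hV, hW, hKV, hKW, hVW⟩ :=
    SeparatedNhds.of_isCompact_isCompact (hK.image hf) hK hfree
  refine ⟨W ∩ f ⁻¹' V, hW.inter (hV.preimage hf), fun x hx => ⟨hKW hx, hKV ⟨x, hx, rfl⟩⟩, ?_⟩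
  exact hVW.mono (image_subset_iff.2 fun x hx => hx.2) inter_subset_left

theorem image_union_inter_union_subset {X : Type*} (f : X → X) {A U : Set X}
    (hU : Disjoint (f '' U) U) (hAU : Disjoint (f '' A) U) (hUA : Disjoint (f '' U) A) :
    f '' (A ∪ U) ∩ (A ∪ U) ⊆ f '' A ∩ A := by
  rw [image_union, union_inter_distrib_right, inter_union_distrib_left,
    inter_union_distrib_left, hAU.inter_eq, hUA.inter_eq, hU.inter_eq]
  simp

theorem disjoint_image_and_preimage_of_subset_diff {X : Type*} {f : X → X} (hf : Injective f)
    {γ γ' : Set X} {z : X} (hγ : f '' γ ∩ γ = {f z}) (hsub : γ' ⊆ γ \ {z, f z}) :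
    Disjoint γ' (f '' γ) ∧ Disjoint γ' (f ⁻¹' γ) := by
  constructor
  · refine disjoint_left.2 fun y hy hfy => (hsub hy).2 (Or.inr ?_)
    exact (hγ.subset ⟨hfy, (hsub hy).1⟩ : y = f z)
  · refine disjoint_left.2 fun y hy hfy => (hsub hy).2 (Or.inl (hf ?_))
    exact (hγ.subset ⟨mem_image_of_mem f (hsub hy).1, hfy⟩ : f y = f z)

theorem IsCompact.exists_isOpen_superset_image_union_inter_subset {X : Type*}
    [TopologicalSpace X] [T2Space X] {f : X → X} (hf : Continuous f) {A K : Set X}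
    (hA : IsCompact A) (hK : IsCompact K) (hKA : K ⊆ A) (hKfA : Disjoint K (f '' A))
    (hKpreA : Disjoint K (f ⁻¹' A)) :
    ∃ U, IsOpen U ∧ K ⊆ U ∧ f '' (A ∪ U) ∩ (A ∪ U) ⊆ f '' A ∩ A := by
  obtain ⟨U₀, hU₀, hKU₀, hU₀free⟩ :=
    hK.exists_isOpen_superset_disjoint_image hf (hKfA.mono_right (image_mono hKA)).symm
  have hclosed : IsClosed (f '' A ∪ f ⁻¹' A) :=
    (hA.image hf).isClosed.union (hA.isClosed.preimage hf)
  refine ⟨U₀ \ (f '' A ∪ f ⁻¹' A), hU₀.sdiff hclosed,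
    subset_sdiff.2 ⟨hKU₀, disjoint_union_right.2 ⟨hKfA, hKpreA⟩⟩, ?_⟩
  refine image_union_inter_union_subset f
    (hU₀free.mono (image_mono sdiff_subset) sdiff_subset) ?_ ?_
  · exact disjoint_right.2 fun x hx hfx => hx.2 (Or.inl hfx)
  · exact disjoint_left.2 fun _ ⟨x, hx, hfx⟩ hAx => hx.2 (Or.inr (show f x ∈ A from hfx ▸ hAx))

/-- Lemma 4.2. -/
theorem handel_lem_4_2 (f : ↥Disk ≃ₜ ↥Disk) (z : ↥Disk)
    (hz : f z ≠ z) (hz2 : f (f z) ≠ z)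
    (γ : Set ↥Disk) (hγ : IsTranslationArc f z γ)
    (γ' : Set ↥Disk) (hγ' : IsSegmentSet γ') (hsub : γ' ⊆ γ \ {z, f z}) :
    ∃ U : Set ↥Disk, IsOpen U ∧ γ' ⊆ U ∧
      ∀ σ : Set ↥Disk, IsSegment σ z (f z) → σ ⊆ γ ∪ U →
        IsTranslationArc f z σ := by
  obtain ⟨-, hγseg, -, hγint⟩ := hγ
  have hint := hγint hz2
  obtain ⟨a, b, hγ'seg⟩ := hγ'
  obtain ⟨hγ'fγ, hγ'preγ⟩ := disjoint_image_and_preimage_of_subset_diff f.injective hint hsub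
  obtain ⟨U, hU, hγ'U, hγU⟩ :=
    hγseg.isCompact.exists_isOpen_superset_image_union_inter_subset f.continuous
      hγ'seg.isCompact (fun x hx => (hsub hx).1) hγ'fγ hγ'preγ
  refine ⟨U, hU, hγ'U, fun σ hσ hσsub => ⟨hz, hσ, fun h => absurd h hz2, fun _ => ?_⟩⟩
  refine subset_antisymm ?_ (singleton_subset_iff.2 ⟨mem_image_of_mem f hσ.left_mem, hσ.right_mem⟩)
  calc f '' σ ∩ σ ⊆ f '' (γ ∪ U) ∩ (γ ∪ U) := inter_subset_inter (image_mono hσsub) hσsub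
    _ ⊆ f '' γ ∩ γ := hγU
    _ = {f z} := hint
end
end
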